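/- arXiv:2304.02617 — 4 statements merged into one kernel-verified Lean document; each statement's English description precedes it below -/
import Mathlib

section
/- Let X be a finite totally ordered set partitioned as X = ⊔_i I_i, and suppose each I_i is further partitioned as I_i = ⊔_j J_{i,j}. If τ is a permutation of X with decomposition τ = π∘σ where π is an (I_i)-shuffle and σ = (σ_i) lies in the Young subgroup of (I_i), then τ is a (J_{i,j})-shuffle if and only if each σ_i is a (J_{i,j})_j-shuffle of I_i. -/
/-- `π` is a shuffle with respect to the block decomposition given by `P`. -/
def IsShuffle {X ι : Type*} [LinearOrder X] (P : X → ι) (π : Equiv.Perm X) : Prop :=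
  ∀ i : ι, StrictMonoOn (⇑π) {x | P x = i}

/-- `σ` lies in the Young subgroup of the partition given by `P`. -/
def IsYoung {X ι : Type*} (P : X → ι) (σ : Equiv.Perm X) : Prop :=
  ∀ x : X, P (σ x) = P x

section

variable {X ι κ : Type*} [LinearOrder X] {P : X → ι} {Q : X → κ} {π σ : Equiv.Perm X}

theorem IsShuffle.lt_iff_lt (hπ : IsShuffle P π) {x y : X} (hxy : P x = P y) :
    π x < π y ↔ x < y :=
  (hπ (P y)).lt_iff_lt hxy rfl

theorem IsShuffle.isShuffle_mul_iff (hπ : IsShuffle P π)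
    (hσ : ∀ x y, Q x = Q y → P (σ x) = P (σ y)) :
    IsShuffle Q (π * σ) ↔ IsShuffle Q σ := by
  refine forall_congr' fun i => forall₂_congr fun x (hx : Q x = i) => forall₂_congr
    fun y (hy : Q y = i) => imp_congr_right fun _ => ?_
  exact hπ.lt_iff_lt (hσ x y (hx.trans hy.symm))

end

theorem shuffle_refinement_general {X ι κ : Type*} [LinearOrder X]
    (P : X → ι) (Q : X → κ) (f : κ → ι) (hf : ∀ x, P x = f (Q x))
    (τ π σ : Equiv.Perm X) (hπ : IsShuffle P π) (hσ : IsYoung P σ)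
    (hτ : τ = π * σ) :
    IsShuffle Q τ ↔ IsShuffle Q σ := by
  subst hτ
  exact hπ.isShuffle_mul_iff fun x y hxy => by rw [hσ, hσ, hf, hf, hxy]

/-- Let `X` be partitioned into blocks by `P : X → ι`, and let each block be further
partitioned by a refinement `Q : X → κ` (so that each `Q`-block lies inside a `P`-block,
as witnessed by `f : κ → ι`).  If `τ = π * σ` where `π` is a `P`-shuffle and `σ` is in the
Young subgroup of `P`, then `τ` is a `Q`-shuffle if and only if `σ` is (i.e. each `σ_i`
is a shuffle of `I_i` with respect to the partition `(J_{i,j})_j`). -/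
theorem shuffle_refinement {X ι κ : Type*} [Fintype X] [LinearOrder X]
    (P : X → ι) (Q : X → κ) (f : κ → ι) (hf : ∀ x, P x = f (Q x))
    (τ π σ : Equiv.Perm X) (hπ : IsShuffle P π) (hσ : IsYoung P σ)
    (hτ : τ = π * σ) :
    IsShuffle Q τ ↔ IsShuffle Q σ :=
  shuffle_refinement_general P Q f hf τ π σ hπ hσ hτ
end

section
/- For partitions d = p + q + r of natural numbers, the shuffle elements in K[S_d] satisfy sh_{p,q,r} = sh_{p+q,r} · (sh_{p,q} ⊗ 1) = sh_{p,q+r} · (1 ⊗ sh_{q,r}), where ⊗ denotes the embedding of products of smaller symmetric group algebras via the Young subgroup. -/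
open scoped Classical

/-- `alt(Y) = Σ_{g ∈ Y} sgn(g)·g` in the group algebra `K[S_X]`. -/
noncomputable def altElem (K : Type*) [CommRing K] {X : Type*} [Fintype X] [DecidableEq X]
    (Y : Set (Equiv.Perm X)) : MonoidAlgebra K (Equiv.Perm X) :=
  ∑ g : Equiv.Perm X,
    if g ∈ Y then MonoidAlgebra.single g (((Equiv.Perm.sign g : ℤ) : K)) else 0

/-- Block function of `{0,…,d-1}` for the composition `d = p + q + r` (three blocks). -/
def block₃ (p q r : ℕ) (x : Fin (p + q + r)) : ℕ :=
  if (x : ℕ) < p then 0 else if (x : ℕ) < p + q then 1 else 2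

/-- Block function for the composition `d = (p+q) + r` (two blocks, cut at `p+q`). -/
def blockLeft (p q r : ℕ) (x : Fin (p + q + r)) : ℕ :=
  if (x : ℕ) < p + q then 0 else 1

/-- Block function for the composition `d = p + (q+r)` (two blocks, cut at `p`). -/
def blockRight (p q r : ℕ) (x : Fin (p + q + r)) : ℕ :=
  if (x : ℕ) < p then 0 else 1

section Aux

variable {X : Type*} [Fintype X] [LinearOrder X]

/-- Two maps strictly monotone on a set with the same image agree on it. -/
lemma eqOn_of_strictMonoOn_image {f g : X → X} {A : Set X}
    (hf : StrictMonoOn f A) (hg : StrictMonoOn g A) (him : f '' A = g '' A) :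
    Set.EqOn f g A := by
  classical
  set s : Finset X := A.toFinset with hs
  have hsA : (s : Set X) = A := A.coe_toFinset
  set t : Finset X := s.image f with ht
  have htA : (t : Set X) = f '' A := by rw [ht, Finset.coe_image, hsA]
  have hcard : t.card = s.card := by
    rw [ht]
    exact Finset.card_image_of_injOn (by rw [hsA]; exact hf.injOn)
  set e := s.orderEmbOfFin (rfl : s.card = s.card) with he
  have heA : ∀ i, (e i : X) ∈ A := fun i => by
    rw [← hsA]; exact Finset.orderEmbOfFin_mem s rfl i
  have hF : (fun i => f (e i)) = t.orderEmbOfFin hcard := by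
    apply Finset.orderEmbOfFin_unique
    · intro i
      rw [← Finset.mem_coe, htA]
      exact ⟨e i, heA i, rfl⟩
    · intro i j hij
      exact hf (heA i) (heA j) (e.strictMono hij)
  have hG : (fun i => g (e i)) = t.orderEmbOfFin hcard := by
    apply Finset.orderEmbOfFin_unique
    · intro i
      rw [← Finset.mem_coe, htA, him]
      exact ⟨e i, heA i, rfl⟩
    · intro i j hij
      exact hg (heA i) (heA j) (e.strictMono hij)
  intro a ha
  have : a ∈ (s : Set X) := by rw [hsA]; exact ha
  have : a ∈ Set.range e := by
    rw [Finset.range_orderEmbOfFin]; exact_mod_cast this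
  obtain ⟨i, rfl⟩ := this
  have := congrFun (hF.trans hG.symm) i
  exact this

/-- The inverse of a permutation strictly monotone on `A` is strictly monotone on the image. -/
lemma perm_inv_strictMonoOn (π : Equiv.Perm X) {A : Set X}
    (h : StrictMonoOn (⇑π) A) : StrictMonoOn (⇑π⁻¹) (π '' A) := by
  rintro _ ⟨a, ha, rfl⟩ _ ⟨b, hb, rfl⟩ hab
  simp only [Equiv.Perm.inv_def, Equiv.symm_apply_apply]
  by_contra hba
  push_neg at hba
  rcases lt_or_eq_of_le hba with hba | rfl
  · exact absurd (h hb ha hba) (not_lt.2 (le_of_lt hab))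
  · exact lt_irrefl _ hab

/-- The image of a set under a permutation, given a membership criterion. -/
lemma perm_image_eq (g : Equiv.Perm X) {A B : Set X} (h : ∀ x, g x ∈ B ↔ x ∈ A) :
    g '' A = B := by
  ext y
  constructor
  · rintro ⟨x, hx, rfl⟩; exact (h x).2 hx
  · intro hy
    refine ⟨g⁻¹ y, (h _).1 ?_, by simp⟩
    simpa using hy

lemma perm_image_compl (g : Equiv.Perm X) (A : Set X) : g '' Aᶜ = (g '' A)ᶜ := by
  apply perm_image_eq
  intro x
  simp only [Set.mem_compl_iff]
  constructor
  · intro hx hxA; exact hx ⟨x, hxA, rfl⟩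
  · intro hx; rintro ⟨y, hy, hxy⟩
    exact hx (g.injective hxy ▸ hy)

/-- A permutation fixing `F` pointwise maps `Fᶜ` onto `Fᶜ`. -/
lemma perm_image_compl_of_fix (h : Equiv.Perm X) {F : Set X}
    (hfix : ∀ x ∈ F, h x = x) : h '' Fᶜ = Fᶜ := by
  apply perm_image_eq
  intro x
  simp only [Set.mem_compl_iff]
  constructor
  · intro hhx hxF
    rw [hfix x hxF] at hhx; exact hhx hxF
  · intro hx hhx
    have := hfix _ hhx
    exact hx (h.injective this ▸ hhx)

lemma subtypeCongr_left_apply {α : Type*} {p q : α → Prop} [DecidablePred p] [DecidablePred q]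
    (e : { x // p x } ≃ { x // q x }) (f : { x // ¬p x } ≃ { x // ¬q x }) {x : α} (h : p x) :
    Equiv.subtypeCongr e f x = e ⟨x, h⟩ := by
  simp [Equiv.subtypeCongr, h]

lemma subtypeCongr_right_apply {α : Type*} {p q : α → Prop} [DecidablePred p] [DecidablePred q]
    (e : { x // p x } ≃ { x // q x }) (f : { x // ¬p x } ≃ { x // ¬q x }) {x : α} (h : ¬ p x) :
    Equiv.subtypeCongr e f x = f ⟨x, h⟩ := by
  simp [Equiv.subtypeCongr, h]

/-- Given two finsets of equal cardinality, there is a permutation mapping one to the other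
monotonically, and the complement to the complement monotonically. -/
lemma exists_sort_perm (s t : Finset X) (hcard : t.card = s.card) :
    ∃ g : Equiv.Perm X, (∀ x, g x ∈ t ↔ x ∈ s) ∧
      StrictMonoOn (⇑g) (s : Set X) ∧ StrictMonoOn (⇑g) ((s : Set X)ᶜ) := by
  classical
  have hcc : tᶜ.card = sᶜ.card := by
    rw [Finset.card_compl, Finset.card_compl, hcard]
  let e₁ : { x // x ∈ s } ≃ { x // x ∈ t } :=
    (s.orderIsoOfFin rfl).symm.toEquiv.trans (t.orderIsoOfFin hcard).toEquiv
  let c₁ : { x // ¬ x ∈ s } ≃ { x // x ∈ sᶜ } :=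
    Equiv.subtypeEquivRight (fun x => (Finset.mem_compl).symm)
  let c₂ : { x // ¬ x ∈ t } ≃ { x // x ∈ tᶜ } :=
    Equiv.subtypeEquivRight (fun x => (Finset.mem_compl).symm)
  let e₂ : { x // ¬ x ∈ s } ≃ { x // ¬ x ∈ t } :=
    c₁.trans (((sᶜ.orderIsoOfFin rfl).symm.toEquiv.trans (tᶜ.orderIsoOfFin hcc).toEquiv).trans
      c₂.symm)
  refine ⟨Equiv.subtypeCongr e₁ e₂, ?_, ?_, ?_⟩
  · intro x
    by_cases hx : x ∈ s
    · rw [subtypeCongr_left_apply e₁ e₂ hx]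
      exact iff_of_true (e₁ ⟨x, hx⟩).2 hx
    · rw [subtypeCongr_right_apply e₁ e₂ hx]
      exact iff_of_false (e₂ ⟨x, hx⟩).2 hx
  · intro x hx y hy hxy
    have hx' : x ∈ s := hx
    have hy' : y ∈ s := hy
    rw [subtypeCongr_left_apply e₁ e₂ hx', subtypeCongr_left_apply e₁ e₂ hy']
    have h1 : (⟨x, hx'⟩ : { x // x ∈ s }) < ⟨y, hy'⟩ := Subtype.mk_lt_mk.2 hxy
    have h2 : (s.orderIsoOfFin rfl).symm ⟨x, hx'⟩ < (s.orderIsoOfFin rfl).symm ⟨y, hy'⟩ :=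
      (s.orderIsoOfFin rfl).symm.strictMono h1
    have h3 := (t.orderIsoOfFin hcard).strictMono h2
    exact h3
  · intro x hx y hy hxy
    have hx' : ¬ x ∈ s := hx
    have hy' : ¬ y ∈ s := hy
    rw [subtypeCongr_right_apply e₁ e₂ hx', subtypeCongr_right_apply e₁ e₂ hy']
    show ((c₂.symm ((tᶜ.orderIsoOfFin hcc) ((sᶜ.orderIsoOfFin rfl).symm (c₁ ⟨x, hx'⟩)))) : X)
      < ((c₂.symm ((tᶜ.orderIsoOfFin hcc) ((sᶜ.orderIsoOfFin rfl).symm (c₁ ⟨y, hy'⟩)))) : X)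
    have h1 : c₁ ⟨x, hx'⟩ < c₁ ⟨y, hy'⟩ := by
      simp only [c₁, Equiv.subtypeEquivRight]
      exact Subtype.mk_lt_mk.2 hxy
    have h2 := (sᶜ.orderIsoOfFin rfl).symm.strictMono h1
    have h3 := (tᶜ.orderIsoOfFin hcc).strictMono h2
    have h4 : ((tᶜ.orderIsoOfFin hcc) ((sᶜ.orderIsoOfFin rfl).symm (c₁ ⟨x, hx'⟩)) : X)
        < ((tᶜ.orderIsoOfFin hcc) ((sᶜ.orderIsoOfFin rfl).symm (c₁ ⟨y, hy'⟩)) : X) := h3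
    exact h4

end Aux

section Mul

variable {K : Type*} [CommRing K] {X : Type*} [Fintype X] [DecidableEq X]

lemma altElem_eq_sum_filter (Y : Set (Equiv.Perm X)) :
    altElem K Y = ∑ g ∈ Finset.univ.filter (· ∈ Y),
      MonoidAlgebra.single g (((Equiv.Perm.sign g : ℤ) : K)) := by
  rw [altElem, Finset.sum_filter]

/-- If multiplication gives a bijection `S × T ≃ U`, then `alt U = alt S * alt T`. -/
lemma altElem_mul_eq (S T U : Set (Equiv.Perm X))
    (hST : ∀ g ∈ S, ∀ h ∈ T, g * h ∈ U)
    (hex : ∀ u ∈ U, ∃ g ∈ S, ∃ h ∈ T, g * h = u)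
    (huniq : ∀ g ∈ S, ∀ h ∈ T, ∀ g' ∈ S, ∀ h' ∈ T, g * h = g' * h' → g = g' ∧ h = h') :
    altElem K U = altElem K S * altElem K T := by
  classical
  rw [altElem_eq_sum_filter, altElem_eq_sum_filter, altElem_eq_sum_filter,
    Finset.sum_mul_sum, ← Finset.sum_product']
  refine (Finset.sum_bij (fun p _ => p.1 * p.2) ?_ ?_ ?_ ?_).symm
  · rintro ⟨g, h⟩ hgh
    simp only [Finset.mem_product, Finset.mem_filter, Finset.mem_univ, true_and] at hgh ⊢
    exact hST g hgh.1 h hgh.2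
  · rintro ⟨g, h⟩ hgh ⟨g', h'⟩ hgh' heq
    simp only [Finset.mem_product, Finset.mem_filter, Finset.mem_univ, true_and] at hgh hgh'
    obtain ⟨h1, h2⟩ := huniq g hgh.1 h hgh.2 g' hgh'.1 h' hgh'.2 heq
    simp [h1, h2]
  · intro u hu
    simp only [Finset.mem_filter, Finset.mem_univ, true_and] at hu
    obtain ⟨g, hg, h, hh, heq⟩ := hex u hu
    exact ⟨⟨g, h⟩, by simp [Finset.mem_product, hg, hh], heq⟩
  · rintro ⟨g, h⟩ hgh
    rw [MonoidAlgebra.single_mul_single]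
    congr 1
    rw [map_mul]
    push_cast
    ring

end Mul

section Main

variable {K : Type*} [CommRing K] {X ι : Type*} [Fintype X] [DecidableEq X] [LinearOrder X]

/-- The key factorization lemma, abstractly. -/
lemma shuffle_factor (P : X → ι) (L F : Set X) (i₀ : ι)
    (hF : {x | P x = i₀} = F) (hFL : F = L ∨ F = Lᶜ) :
    altElem K {u | IsShuffle P u} =
      altElem K {g : Equiv.Perm X | StrictMonoOn (⇑g) L ∧ StrictMonoOn (⇑g) Lᶜ} *
        altElem K {h | IsShuffle P h ∧ ∀ x ∈ F, h x = x} := by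
  classical
  -- monotonicity of g on F and on Fᶜ, for g in S
  have hgF : ∀ g : Equiv.Perm X, StrictMonoOn (⇑g) L → StrictMonoOn (⇑g) Lᶜ →
      StrictMonoOn (⇑g) F := by
    intro g h1 h2
    rcases hFL with h | h <;> rw [h] <;> assumption
  have hgFc : ∀ g : Equiv.Perm X, StrictMonoOn (⇑g) L → StrictMonoOn (⇑g) Lᶜ →
      StrictMonoOn (⇑g) Fᶜ := by
    intro g h1 h2
    rcases hFL with h | h <;> rw [h]
    · assumption
    · rwa [compl_compl]
  -- block ≠ i₀ is inside Fᶜ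
  have hblock : ∀ i : ι, i ≠ i₀ → ∀ x, P x = i → x ∈ Fᶜ := by
    intro i hi x hx hxF
    rw [← hF] at hxF
    exact hi (hx ▸ hxF)
  apply altElem_mul_eq
  · -- closure
    rintro g ⟨hg1, hg2⟩ h ⟨hh1, hh2⟩
    have hhc : h '' Fᶜ = Fᶜ := perm_image_compl_of_fix h hh2
    intro i x hx y hy hxy
    simp only [Set.mem_setOf_eq] at hx hy
    by_cases hi : i = i₀
    · subst hi
      have hxF : x ∈ F := hF ▸ hx
      have hyF : y ∈ F := hF ▸ hy
      show g (h x) < g (h y)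
      rw [hh2 x hxF, hh2 y hyF]
      exact hgF g hg1 hg2 hxF hyF hxy
    · have hxF : x ∈ Fᶜ := hblock i hi x hx
      have hyF : y ∈ Fᶜ := hblock i hi y hy
      show g (h x) < g (h y)
      have h1 : h x < h y := hh1 i hx hy hxy
      have h2 : h x ∈ Fᶜ := by rw [← hhc]; exact ⟨x, hxF, rfl⟩
      have h3 : h y ∈ Fᶜ := by rw [← hhc]; exact ⟨y, hyF, rfl⟩
      exact hgFc g hg1 hg2 h2 h3 h1
  · -- existence of factorization
    intro u hu
    have huS : IsShuffle P u := hu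
    have huF : StrictMonoOn (⇑u) F := by rw [← hF]; exact huS i₀
    -- the sorting permutation
    set s : Finset X := L.toFinset with hs
    have hsL : (s : Set X) = L := L.coe_toFinset
    set t : Finset X := s.image u with htdef
    have htim : (t : Set X) = u '' L := by rw [htdef, Finset.coe_image, hsL]
    have hcard : t.card = s.card :=
      Finset.card_image_of_injOn (u.injective.injOn)
    obtain ⟨g, hgmem, hgmono1, hgmono2⟩ := exists_sort_perm s t hcard
    have hgL : StrictMonoOn (⇑g) L := by rwa [hsL] at hgmono1
    have hgLc : StrictMonoOn (⇑g) Lᶜ := by rwa [hsL] at hgmono2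
    -- images
    have hgim : g '' L = u '' L := by
      rw [← htim, ← hsL]
      apply perm_image_eq
      intro x
      rw [Finset.mem_coe, Finset.mem_coe]
      exact hgmem x
    have hgimc : g '' Lᶜ = u '' Lᶜ := by
      rw [perm_image_compl, perm_image_compl, hgim]
    have hgimF : g '' F = u '' F := by
      rcases hFL with h | h <;> rw [h] <;> assumption
    have hgimFc : g '' Fᶜ = u '' Fᶜ := by
      rw [perm_image_compl, perm_image_compl, hgimF]
    -- g agrees with u on F
    have heqF : Set.EqOn (⇑g) (⇑u) F :=
      eqOn_of_strictMonoOn_image (hgF g hgL hgLc) huF hgimF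
    set h : Equiv.Perm X := g⁻¹ * u with hh
    have hhfix : ∀ x ∈ F, h x = x := by
      intro x hx
      show g⁻¹ (u x) = x
      rw [← heqF hx]
      simp
    refine ⟨g, ⟨hgL, hgLc⟩, h, ⟨?_, hhfix⟩, by rw [hh, mul_inv_cancel_left]⟩
    -- h is a P-shuffle
    intro i x hx y hy hxy
    simp only [Set.mem_setOf_eq] at hx hy
    by_cases hi : i = i₀
    · subst hi
      have hxF : x ∈ F := hF ▸ hx
      have hyF : y ∈ F := hF ▸ hy
      rw [hhfix x hxF, hhfix y hyF]
      exact hxy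
    · have hxF : x ∈ Fᶜ := hblock i hi x hx
      have hyF : y ∈ Fᶜ := hblock i hi y hy
      show g⁻¹ (u x) < g⁻¹ (u y)
      have h1 : u x < u y := huS i hx hy hxy
      have hinv : StrictMonoOn (⇑g⁻¹) (g '' Fᶜ) :=
        perm_inv_strictMonoOn g (hgFc g hgL hgLc)
      have h2 : u x ∈ g '' Fᶜ := by rw [hgimFc]; exact ⟨x, hxF, rfl⟩
      have h3 : u y ∈ g '' Fᶜ := by rw [hgimFc]; exact ⟨y, hyF, rfl⟩
      exact hinv h2 h3 h1
  · -- uniqueness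
    rintro g ⟨hg1, hg2⟩ h ⟨hh1, hh2⟩ g' ⟨hg1', hg2'⟩ h' ⟨hh1', hh2'⟩ heq
    have key : ∀ x, g (h x) = g' (h' x) := by
      intro x
      have := congrArg (fun π : Equiv.Perm X => π x) heq
      simpa [Equiv.Perm.mul_apply] using this
    have heqF : Set.EqOn (⇑g) (⇑g') F := by
      intro x hx
      have := key x
      rwa [hh2 x hx, hh2' x hx] at this
    have hhc : h '' Fᶜ = Fᶜ := perm_image_compl_of_fix h hh2
    have hhc' : h' '' Fᶜ = Fᶜ := perm_image_compl_of_fix h' hh2'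
    have him : g '' Fᶜ = g' '' Fᶜ := by
      have e1 : g '' Fᶜ = (g * h) '' Fᶜ := by
        conv_lhs => rw [← hhc]
        rw [Set.image_image]
        rfl
      have e2 : g' '' Fᶜ = (g' * h') '' Fᶜ := by
        conv_lhs => rw [← hhc']
        rw [Set.image_image]
        rfl
      rw [e1, e2, heq]
    have heqFc : Set.EqOn (⇑g) (⇑g') Fᶜ :=
      eqOn_of_strictMonoOn_image (hgFc g hg1 hg2) (hgFc g' hg1' hg2') him
    have hgg : g = g' := by
      ext x
      by_cases hx : x ∈ F
      · exact heqF hx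
      · exact heqFc hx
    subst hgg
    exact ⟨rfl, mul_left_cancel heq⟩

end Main

section Concrete

lemma twoBlock_shuffle_iff {d : ℕ} (c : ℕ) (g : Equiv.Perm (Fin d)) :
    IsShuffle (fun x : Fin d => if (x : ℕ) < c then 0 else 1) g ↔
      StrictMonoOn (⇑g) {x : Fin d | (x : ℕ) < c} ∧
        StrictMonoOn (⇑g) ({x : Fin d | (x : ℕ) < c}ᶜ) := by
  constructor
  · intro hg
    constructor
    · intro x hx y hy hxy
      have hx' : (x : ℕ) < c := hx
      have hy' : (y : ℕ) < c := hy
      exact hg 0 (show (if (x : ℕ) < c then 0 else 1) = 0 by rw [if_pos hx'])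
        (show (if (y : ℕ) < c then 0 else 1) = 0 by rw [if_pos hy']) hxy
    · intro x hx y hy hxy
      have hx' : ¬ (x : ℕ) < c := hx
      have hy' : ¬ (y : ℕ) < c := hy
      exact hg 1 (show (if (x : ℕ) < c then 0 else 1) = 1 by rw [if_neg hx'])
        (show (if (y : ℕ) < c then 0 else 1) = 1 by rw [if_neg hy']) hxy
  · rintro ⟨hml, hmc⟩ i x hx y hy hxy
    simp only [Set.mem_setOf_eq] at hx hy
    split_ifs at hx hy with hc1 hc2 hc3
    · exact hml hc1 hc2 hxy
    · omega
    · omega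
    · exact hmc hc1 hc3 hxy

end Concrete

/-- Associativity of shuffle elements. -/
theorem shuffle_element_assoc (K : Type*) [CommRing K] (p q r : ℕ) :
    (altElem K {g | IsShuffle (block₃ p q r) g} =
      altElem K {g | IsShuffle (blockLeft p q r) g} *
        altElem K {g : Equiv.Perm (Fin (p + q + r)) |
          IsShuffle (block₃ p q r) g ∧ ∀ x : Fin (p + q + r), p + q ≤ (x : ℕ) → g x = x}) ∧
    (altElem K {g | IsShuffle (block₃ p q r) g} =
      altElem K {g | IsShuffle (blockRight p q r) g} *
        altElem K {g : Equiv.Perm (Fin (p + q + r)) |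
          IsShuffle (block₃ p q r) g ∧ ∀ x : Fin (p + q + r), (x : ℕ) < p → g x = x}) := by
  constructor
  · -- left: L = {x < p+q}, F = Lᶜ, i₀ = 2
    have e1 : {x : Fin (p + q + r) | block₃ p q r x = 2}
        = ({x : Fin (p + q + r) | (x : ℕ) < p + q}ᶜ) := by
      ext x
      simp only [Set.mem_setOf_eq, Set.mem_compl_iff, block₃, not_lt]
      constructor
      · intro hx
        split_ifs at hx <;> omega
      · intro hx
        rw [if_neg (by omega), if_neg (by omega)]
    have h := shuffle_factor (K := K) (block₃ p q r)
      {x : Fin (p + q + r) | (x : ℕ) < p + q} _ 2 e1 (Or.inr rfl)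
    have e2 : {g : Equiv.Perm (Fin (p + q + r)) | IsShuffle (blockLeft p q r) g}
        = {g : Equiv.Perm (Fin (p + q + r)) |
            StrictMonoOn (⇑g) {x : Fin (p + q + r) | (x : ℕ) < p + q}
              ∧ StrictMonoOn (⇑g) ({x : Fin (p + q + r) | (x : ℕ) < p + q}ᶜ)} :=
      Set.ext fun g => twoBlock_shuffle_iff (p + q) g
    have e3 : {g : Equiv.Perm (Fin (p + q + r)) |
          IsShuffle (block₃ p q r) g ∧ ∀ x : Fin (p + q + r), p + q ≤ (x : ℕ) → g x = x}
        = {h : Equiv.Perm (Fin (p + q + r)) | IsShuffle (block₃ p q r) h ∧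
            ∀ x ∈ ({x : Fin (p + q + r) | (x : ℕ) < p + q}ᶜ), h x = x} := by
      ext g
      simp only [Set.mem_setOf_eq]
      constructor
      · rintro ⟨a, b⟩
        exact ⟨a, fun x hx => b x (not_lt.1 hx)⟩
      · rintro ⟨a, b⟩
        exact ⟨a, fun x hx => b x (not_lt.2 hx)⟩
    rw [e2, e3]
    exact h
  · -- right: L = {x < p}, F = L, i₀ = 0
    have e1 : {x : Fin (p + q + r) | block₃ p q r x = 0}
        = {x : Fin (p + q + r) | (x : ℕ) < p} := by
      ext x
      simp only [Set.mem_setOf_eq, block₃]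
      constructor
      · intro hx
        split_ifs at hx <;> omega
      · intro hx
        rw [if_pos hx]
    have h := shuffle_factor (K := K) (block₃ p q r)
      {x : Fin (p + q + r) | (x : ℕ) < p} _ 0 e1 (Or.inl rfl)
    have e2 : {g : Equiv.Perm (Fin (p + q + r)) | IsShuffle (blockRight p q r) g}
        = {g : Equiv.Perm (Fin (p + q + r)) |
            StrictMonoOn (⇑g) {x : Fin (p + q + r) | (x : ℕ) < p}
              ∧ StrictMonoOn (⇑g) ({x : Fin (p + q + r) | (x : ℕ) < p}ᶜ)} :=
      Set.ext fun g => twoBlock_shuffle_iff p g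
    have e3 : {g : Equiv.Perm (Fin (p + q + r)) |
          IsShuffle (block₃ p q r) g ∧ ∀ x : Fin (p + q + r), (x : ℕ) < p → g x = x}
        = {h : Equiv.Perm (Fin (p + q + r)) | IsShuffle (block₃ p q r) h ∧
            ∀ x ∈ {x : Fin (p + q + r) | (x : ℕ) < p}, h x = x} := rfl
    rw [e2, e3]
    exact h
end

section
/- In an M-structured semiring R (an augmented M-graded pre-λ-semiring with a positive structure), the set ℓ(R) of line elements is a saturated submonoid of the multiplicative monoid of homogeneous elements: it is closed under multiplication, and if x·y = z with x, z line elements and y homogeneous graded-invertible, then y is a line element. -/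
/-- An `M`-graded pre-λ-semiring structure on a commutative semiring `R`. -/
structure GradedPreLambda (M : Type*) [AddCommMonoid M] [DecidableEq M]
    (R : Type*) [CommSemiring R] where
  grade : M → AddSubmonoid R
  one_mem : (1 : R) ∈ grade 0
  mul_mem : ∀ {g h : M} {x y : R}, x ∈ grade g → y ∈ grade h → x * y ∈ grade (g + h)
  internal : DirectSum.IsInternal grade
  lam : ℕ → R → R
  lam_grade : ∀ (d : ℕ) (g : M) (x : R), x ∈ grade g → lam d x ∈ grade (d • g)
  lam_zero : ∀ x, lam 0 x = 1
  lam_one : ∀ x, lam 1 x = x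
  lam_add : ∀ (d : ℕ) (x y : R),
    lam d (x + y) = ∑ pq ∈ Finset.HasAntidiagonal.antidiagonal d, lam pq.1 x * lam pq.2 y

/-- An augmented `M`-graded pre-λ-semiring: a graded pre-λ-semiring together with a
graded λ-morphism `δ̃ : R → ℤ[M]`, where `ℤ[M]` carries the canonical structure
`λ^d(n·g) = C(n,d)·(d•g)`. -/
structure AugGradedPreLambda (M : Type*) [AddCommMonoid M] [DecidableEq M]
    (R : Type*) [CommSemiring R] extends GradedPreLambda M R where
  aug : R →+* AddMonoidAlgebra ℤ M
  aug_graded : ∀ (g : M) (x : R), x ∈ grade g →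
    (show M →₀ ℤ from (aug x).coeff).support ⊆ {g}
  aug_lam : ∀ (d : ℕ) (g : M) (x : R), x ∈ grade g →
    (show M →₀ ℤ from (aug (lam d x)).coeff) =
      Finsupp.single (d • g) (Ring.choose ((show M →₀ ℤ from (aug x).coeff) g) d)

/-- The total augmentation `δ_R : R → ℤ`, obtained by summing the coefficients of `δ̃`. -/
noncomputable def AugGradedPreLambda.total {M : Type*} [AddCommMonoid M] [DecidableEq M]
    {R : Type*} [CommSemiring R] (D : AugGradedPreLambda M R) (x : R) : ℤ :=
  Finsupp.sum (show M →₀ ℤ from (D.aug x).coeff) (fun _ n => n)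

/-- A homogeneous element `x` of degree `g` is graded-invertible if multiplication by `x`
induces bijections `R_h → R_{h+g}` for all `h ∈ M`. -/
def AugGradedPreLambda.GradedInvertible {M : Type*} [AddCommMonoid M] [DecidableEq M]
    {R : Type*} [CommSemiring R] (D : AugGradedPreLambda M R) (x : R) : Prop :=
  ∃ g : M, x ∈ D.grade g ∧
    ∀ h : M, Set.BijOn (fun y => x * y) (D.grade h) (D.grade (h + g))

/-- An `M`-structured semiring: an augmented `M`-graded pre-λ-semiring together with a
positive structure, i.e. a sub-semiring `pos = R_{≥0}` closed under the λ-operations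
which is rigid (additively cancellative, positive homogeneous elements of augmentation 0
vanish, and positive homogeneous 1-dimensional elements are graded-invertible in
`R_{≥0}`, and — since `(R_{≥0})^× ⊆ R^×` — also in `R`), and such that every homogeneous
element `x` satisfies `x + a = b` for some positive homogeneous `a, b`. -/
structure StructuredSemiring (M : Type*) [AddCommMonoid M] [DecidableEq M]
    (R : Type*) [CommSemiring R] extends AugGradedPreLambda M R where
  pos : Subsemiring R
  pos_lam : ∀ (d : ℕ) (x : R), x ∈ pos → lam d x ∈ pos
  pos_cancel : ∀ a b c : R, a ∈ pos → b ∈ pos → c ∈ pos → a + b = a + c → b = c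
  pos_aug_zero : ∀ (g : M) (x : R), x ∈ grade g → x ∈ pos →
    Finsupp.sum (show M →₀ ℤ from (aug x).coeff) (fun _ n => n) = 0 → x = 0
  pos_line_inv : ∀ (g : M) (x : R), x ∈ grade g → x ∈ pos →
    IsGreatest {n : ℕ | lam n x ≠ 0} 1 →
    (∀ h : M, Set.BijOn (fun y => x * y)
        ((grade h : Set R) ∩ (pos : Set R)) ((grade (h + g) : Set R) ∩ (pos : Set R))) ∧
    (∀ h : M, Set.BijOn (fun y => x * y) (grade h) (grade (h + g)))
  pos_sum : ∀ (g : M) (x : R), x ∈ grade g →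
    ∃ a b : R, a ∈ pos ∧ b ∈ pos ∧ a ∈ grade g ∧ b ∈ grade g ∧ x + a = b

/-- A line element: a positive homogeneous element of λ-dimension 1. -/
def StructuredSemiring.IsLine {M : Type*} [AddCommMonoid M] [DecidableEq M]
    {R : Type*} [CommSemiring R] (D : StructuredSemiring M R) (x : R) : Prop :=
  x ∈ D.pos ∧ (∃ g : M, x ∈ D.grade g) ∧ IsGreatest {n : ℕ | D.lam n x ≠ 0} 1

section Aux

variable {M : Type*} [AddCommMonoid M] [DecidableEq M]
    {R : Type*} [CommSemiring R]

/-- If `x ∈ grade g` then its augmentation is a single Finsupp concentrated at `g`. -/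
lemma StructuredSemiring.aug_eq_single (D : StructuredSemiring M R) {g : M} {x : R}
    (hx : x ∈ D.grade g) :
    (show M →₀ ℤ from (D.aug x).coeff) = Finsupp.single g ((show M →₀ ℤ from (D.aug x).coeff) g) :=
  Finsupp.support_subset_singleton.mp (D.aug_graded g x hx)

/-- Integer arithmetic: `C(n,2) = 0` forces `n ∈ {0, 1}`. -/
lemma choose_two_zero {n : ℤ} (h : Ring.choose n 2 = 0) : n = 0 ∨ n = 1 := by
  have h2 := Ring.descPochhammer_eq_factorial_smul_choose n 2
  rw [h, smul_zero, ← Polynomial.eval_eq_smeval, descPochhammer_succ_eval,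
    descPochhammer_one, Polynomial.eval_X] at h2
  push_cast at h2
  rcases mul_eq_zero.mp h2 with h | h
  · exact Or.inl h
  · exact Or.inr (by linarith)

/-- `C(1,n) = 0` in `ℤ` for `n ≥ 2`. -/
lemma choose_one_int {n : ℕ} (h : 2 ≤ n) : Ring.choose (1:ℤ) n = 0 := by
  have := Ring.choose_natCast (R := ℤ) 1 n
  rw [Nat.cast_one] at this
  rw [this, Nat.choose_eq_zero_of_lt h]
  simp

/-- A positive homogeneous element whose augmentation is `single g 1` is a line element. -/
lemma StructuredSemiring.isLine_of_aug [Nontrivial R] (D : StructuredSemiring M R)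
    {g : M} {x : R} (hg : x ∈ D.grade g) (hp : x ∈ D.pos)
    (ha : (show M →₀ ℤ from (D.aug x).coeff) = Finsupp.single g 1) : D.IsLine x := by
  have hx0 : x ≠ 0 := by
    intro h
    rw [h, map_zero] at ha
    exact one_ne_zero (Finsupp.single_eq_zero.mp ha.symm)
  refine ⟨hp, ⟨g, hg⟩, ?_, ?_⟩
  · show D.lam 1 x ≠ 0
    rw [D.lam_one]; exact hx0
  · intro n hn
    by_contra hlt
    push_neg at hlt
    have hn2 : 2 ≤ n := hlt
    have hl := D.aug_lam n g x hg
    rw [ha, Finsupp.single_eq_same, choose_one_int hn2, Finsupp.single_zero] at hl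
    have hz : D.lam n x = 0 := by
      refine D.pos_aug_zero (n • g) _ (D.lam_grade n g x hg) (D.pos_lam n x hp) ?_
      rw [hl, Finsupp.sum_zero_index]
    exact hn hz

/-- Conversely, a line element of degree `g` has augmentation `single g 1`. -/
lemma StructuredSemiring.aug_of_isLine (D : StructuredSemiring M R)
    {g : M} {x : R} (hx : D.IsLine x) (hg : x ∈ D.grade g) :
    (show M →₀ ℤ from (D.aug x).coeff) = Finsupp.single g 1 := by
  obtain ⟨hp, -, hmem, hub⟩ := hx
  set n : ℤ := (show M →₀ ℤ from (D.aug x).coeff) g with hn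
  have hsingle := D.aug_eq_single hg
  have hx0 : x ≠ 0 := by
    have := hmem
    simpa [D.lam_one] using this
  have hn0 : n ≠ 0 := by
    intro h0
    apply hx0
    refine D.pos_aug_zero g x hg hp ?_
    rw [hsingle, ← hn, h0, Finsupp.single_zero, Finsupp.sum_zero_index]
  have hlam2 : D.lam 2 x = 0 := by
    by_contra h2
    exact absurd (hub h2) (by norm_num)
  have hl := D.aug_lam 2 g x hg
  rw [hlam2, map_zero, ← hn] at hl
  have hc : Ring.choose n 2 = 0 := by
    have := congrArg (fun f : M →₀ ℤ => f (2 • g)) hl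
    simpa using this.symm
  rcases choose_two_zero hc with h | h
  · exact absurd h hn0
  · rw [hsingle, ← hn, h]

end Aux

/-- In an `M`-structured semiring, the line elements form a saturated submonoid of the
multiplicative monoid of homogeneous elements: they are closed under multiplication, and
if `x·y = z` with `x, z` line elements and `y` homogeneous graded-invertible, then `y`
is a line element. -/
theorem line_elements_saturated_submonoid {M : Type*} [AddCommMonoid M] [DecidableEq M]
    {R : Type*} [CommSemiring R] [Nontrivial R] (D : StructuredSemiring M R) :
    (∀ x y : R, D.IsLine x → D.IsLine y → D.IsLine (x * y)) ∧
    (∀ x y z : R, D.IsLine x → D.IsLine z →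
      D.toAugGradedPreLambda.GradedInvertible y → x * y = z → D.IsLine y) := by
  constructor
  · intro x y hx hy
    obtain ⟨g, hg⟩ := hx.2.1
    obtain ⟨h, hh⟩ := hy.2.1
    have hax : D.aug x = AddMonoidAlgebra.single g 1 := AddMonoidAlgebra.coeff_injective (D.aug_of_isLine hx hg)
    have hay : D.aug y = AddMonoidAlgebra.single h 1 := AddMonoidAlgebra.coeff_injective (D.aug_of_isLine hy hh)
    have hmul : (show M →₀ ℤ from (D.aug (x * y)).coeff) = Finsupp.single (g + h) 1 := by
      show (D.aug (x * y)).coeff = (AddMonoidAlgebra.single (g + h) 1 : AddMonoidAlgebra ℤ M).coeff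
      rw [map_mul, hax, hay, AddMonoidAlgebra.single_mul_single, one_mul]
    exact D.isLine_of_aug (D.mul_mem hg hh) (mul_mem hx.1 hy.1) hmul
  · intro x y z hx hz hy hxyz
    obtain ⟨g, hg⟩ := hx.2.1
    obtain ⟨h, hyh, -⟩ := hy
    obtain ⟨hBpos, hBall⟩ := D.pos_line_inv g x hg hx.1 hx.2.2
    -- `y` is positive: use surjectivity of the positive bijection and injectivity overall
    have hzmem : z ∈ (D.grade (h + g) : Set R) ∩ (D.pos : Set R) := by
      refine ⟨?_, hz.1⟩
      rw [← hxyz, add_comm h g]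
      exact D.mul_mem hg hyh
    obtain ⟨y', hy'mem, hy'eq⟩ := (hBpos h).surjOn hzmem
    have hy'h : y' ∈ D.grade h := hy'mem.1
    have hyy' : y = y' := by
      refine (hBall h).injOn hyh hy'h ?_
      show x * y = x * y'
      rw [hxyz]
      exact hy'eq.symm
    have hypos : y ∈ D.pos := hyy' ▸ hy'mem.2
    -- compute the augmentation of `y`
    obtain ⟨g', hg'⟩ := hz.2.1
    have haz : D.aug z = AddMonoidAlgebra.single g' 1 := AddMonoidAlgebra.coeff_injective (D.aug_of_isLine hz hg')
    have hax : D.aug x = AddMonoidAlgebra.single g 1 := AddMonoidAlgebra.coeff_injective (D.aug_of_isLine hx hg)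
    have hay : D.aug y = AddMonoidAlgebra.single h ((show M →₀ ℤ from (D.aug y).coeff) h) :=
      AddMonoidAlgebra.coeff_injective (D.aug_eq_single hyh)
    set m : ℤ := (show M →₀ ℤ from (D.aug y).coeff) h with hm
    have hmul : (Finsupp.single g' 1 : M →₀ ℤ) = Finsupp.single (g + h) m := by
      show (AddMonoidAlgebra.single g' 1 : AddMonoidAlgebra ℤ M).coeff
        = (AddMonoidAlgebra.single (g + h) m : AddMonoidAlgebra ℤ M).coeff
      rw [← haz, ← hxyz, map_mul, hax, hay, AddMonoidAlgebra.single_mul_single, one_mul]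
    have hm1 : m = 1 := by
      rcases Finsupp.single_eq_single_iff _ _ _ _ |>.mp hmul with ⟨-, h1⟩ | ⟨h1, -⟩
      · exact h1.symm
      · exact absurd h1 one_ne_zero
    rw [hm1] at hay
    exact D.isLine_of_aug hyh hypos (congrArg AddMonoidAlgebra.coeff hay)
end

section
/- Let S be a commutative semiring with Grothendieck ring G(S), equipped with a pre-λ-semiring structure. Then there is a unique pre-λ-ring structure on G(S) making the canonical map S → G(S) a λ-morphism, and for any pre-λ-ring R and λ-morphism S → R, the induced ring morphism G(S) → R is a λ-morphism. -/
universe u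

/-- A pre-λ-(semi)ring structure: `λ^0 = 1`, `λ^1 = id`, and
`λ^d(x+y) = Σ_{p+q=d} λ^p(x)·λ^q(y)`. -/
def IsPreLambda {R : Type u} [CommSemiring R] (l : ℕ → R → R) : Prop :=
  (∀ x, l 0 x = 1) ∧ (∀ x, l 1 x = x) ∧
  (∀ (d : ℕ) (x y : R),
    l d (x + y) = ∑ pq ∈ Finset.HasAntidiagonal.antidiagonal d, l pq.1 x * l pq.2 y)

namespace GrothAux

variable (S : Type u) [CommSemiring S]

def rel (a b : S × S) : Prop := ∃ s, a.1 + b.2 + s = b.1 + a.2 + s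

theorem rel_refl (a : S × S) : rel S a a := ⟨0, rfl⟩

theorem rel_symm {a b : S × S} (h : rel S a b) : rel S b a := by
  obtain ⟨s, hs⟩ := h; exact ⟨s, hs.symm⟩

theorem rel_trans {a b c : S × S} (h1 : rel S a b) (h2 : rel S b c) : rel S a c := by
  obtain ⟨s, hs⟩ := h1; obtain ⟨t, ht⟩ := h2
  refine ⟨b.2 + b.1 + s + t, ?_⟩
  have e : a.1 + c.2 + (b.2 + b.1 + s + t) = (a.1 + b.2 + s) + (b.1 + c.2 + t) := by ring
  rw [e, hs, ht]; ring

instance sd : Setoid (S × S) :=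
  ⟨rel S, ⟨rel_refl S, fun h => rel_symm S h, fun h1 h2 => rel_trans S h1 h2⟩⟩

def GR := Quotient (sd S)

variable {S}

open Relator in
theorem add_wd : ((· ≈ ·) ⇒ (· ≈ ·) ⇒ (· ≈ ·))
    (fun a b : S × S => (a.1 + b.1, a.2 + b.2)) (fun a b => (a.1 + b.1, a.2 + b.2)) := by
  rintro a a' ⟨s, hs⟩ b b' ⟨t, ht⟩
  refine ⟨s + t, ?_⟩
  have e : a.1 + b.1 + (a'.2 + b'.2) + (s + t) = (a.1 + a'.2 + s) + (b.1 + b'.2 + t) := by ring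
  rw [show a.1 + b.1 + (a'.2 + b'.2) + (s + t) = (a.1 + a'.2 + s) + (b.1 + b'.2 + t) from by ring,
    hs, ht]
  ring

private def pmul (a b : S × S) : S × S := (a.1 * b.1 + a.2 * b.2, a.1 * b.2 + a.2 * b.1)

theorem mul_wd_left {a a' : S × S} (b : S × S) (h : rel S a a') : rel S (pmul a b) (pmul a' b) := by
  obtain ⟨s, hs⟩ := h
  refine ⟨s * b.1 + s * b.2, ?_⟩
  show a.1 * b.1 + a.2 * b.2 + (a'.1 * b.2 + a'.2 * b.1) + (s * b.1 + s * b.2)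
      = a'.1 * b.1 + a'.2 * b.2 + (a.1 * b.2 + a.2 * b.1) + (s * b.1 + s * b.2)
  rw [show a.1 * b.1 + a.2 * b.2 + (a'.1 * b.2 + a'.2 * b.1) + (s * b.1 + s * b.2)
      = b.1 * (a.1 + a'.2 + s) + b.2 * (a.2 + a'.1 + s) from by ring,
    show a'.1 * b.1 + a'.2 * b.2 + (a.1 * b.2 + a.2 * b.1) + (s * b.1 + s * b.2)
      = b.1 * (a'.1 + a.2 + s) + b.2 * (a'.2 + a.1 + s) from by ring, hs,
    show a.2 + a'.1 + s = a'.1 + a.2 + s from by ring, ← hs]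
  ring

theorem mul_wd_right (a : S × S) {b b' : S × S} (h : rel S b b') : rel S (pmul a b) (pmul a b') := by
  obtain ⟨s, hs⟩ := h
  refine ⟨s * a.1 + s * a.2, ?_⟩
  show a.1 * b.1 + a.2 * b.2 + (a.1 * b'.2 + a.2 * b'.1) + (s * a.1 + s * a.2)
      = a.1 * b'.1 + a.2 * b'.2 + (a.1 * b.2 + a.2 * b.1) + (s * a.1 + s * a.2)
  rw [show a.1 * b.1 + a.2 * b.2 + (a.1 * b'.2 + a.2 * b'.1) + (s * a.1 + s * a.2)
      = a.1 * (b.1 + b'.2 + s) + a.2 * (b.2 + b'.1 + s) from by ring,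
    show a.1 * b'.1 + a.2 * b'.2 + (a.1 * b.2 + a.2 * b.1) + (s * a.1 + s * a.2)
      = a.1 * (b'.1 + b.2 + s) + a.2 * (b'.2 + b.1 + s) from by ring, hs,
    show b.2 + b'.1 + s = b'.1 + b.2 + s from by ring, ← hs]
  ring

open Relator in
theorem mul_wd : ((· ≈ ·) ⇒ (· ≈ ·) ⇒ (· ≈ ·)) (pmul (S := S)) pmul := by
  rintro a a' ha b b' hb
  exact rel_trans S (mul_wd_left b ha) (mul_wd_right a' hb)

instance : Add (GR S) := ⟨Quotient.map₂ (fun a b => (a.1 + b.1, a.2 + b.2)) add_wd⟩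
instance : Mul (GR S) := ⟨Quotient.map₂ pmul mul_wd⟩
instance : Zero (GR S) := ⟨⟦(0, 0)⟧⟩
instance : One (GR S) := ⟨⟦(1, 0)⟧⟩
instance : Neg (GR S) := ⟨Quotient.map (fun a => (a.2, a.1)) (by rintro a a' ⟨s, hs⟩; exact ⟨s, by
    rw [show a.2 + a'.1 + s = a'.1 + a.2 + s from by ring, ← hs]; ring⟩)⟩

instance : CommRing (GR S) where
  add := (· + ·)
  mul := (· * ·)
  zero := 0
  one := 1
  neg := (- ·)
  add_assoc := by rintro ⟨a⟩ ⟨b⟩ ⟨c⟩; exact Quotient.sound ⟨0, by ring⟩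
  zero_add := by rintro ⟨a⟩; exact Quotient.sound ⟨0, by ring⟩
  add_zero := by rintro ⟨a⟩; exact Quotient.sound ⟨0, by ring⟩
  add_comm := by rintro ⟨a⟩ ⟨b⟩; exact Quotient.sound ⟨0, by ring⟩
  mul_assoc := by rintro ⟨a⟩ ⟨b⟩ ⟨c⟩; exact Quotient.sound ⟨0, by simp only [pmul]; ring⟩
  one_mul := by rintro ⟨a⟩; exact Quotient.sound ⟨0, by simp only [pmul]; ring⟩
  mul_one := by rintro ⟨a⟩; exact Quotient.sound ⟨0, by simp only [pmul]; ring⟩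
  left_distrib := by rintro ⟨a⟩ ⟨b⟩ ⟨c⟩; exact Quotient.sound ⟨0, by simp only [pmul]; ring⟩
  right_distrib := by rintro ⟨a⟩ ⟨b⟩ ⟨c⟩; exact Quotient.sound ⟨0, by simp only [pmul]; ring⟩
  zero_mul := by rintro ⟨a⟩; exact Quotient.sound ⟨0, by simp only [pmul]; ring⟩
  mul_zero := by rintro ⟨a⟩; exact Quotient.sound ⟨0, by simp only [pmul]; ring⟩
  mul_comm := by rintro ⟨a⟩ ⟨b⟩; exact Quotient.sound ⟨0, by simp only [pmul]; ring⟩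
  neg_add_cancel := by rintro ⟨a⟩; exact Quotient.sound ⟨0, by ring⟩
  nsmul := nsmulRec
  zsmul := zsmulRec

variable (S)

def mkHom : S →+* GR S where
  toFun s := ⟦(s, 0)⟧
  map_one' := Quotient.sound ⟨0, by ring⟩
  map_mul' a b := Quotient.sound ⟨0, by simp only [pmul]; ring⟩
  map_zero' := Quotient.sound ⟨0, by ring⟩
  map_add' a b := Quotient.sound ⟨0, by ring⟩

variable {S}

theorem mk_cancel {u v : S} (h : mkHom S u = mkHom S v) : ∃ s, u + s = v + s := by
  obtain ⟨s, hs⟩ := Quotient.exact h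
  exact ⟨s, by simpa using hs⟩

end GrothAux

/-- Let `S` be a commutative semiring with a pre-λ-semiring structure, and let
`j : S → G` be its Grothendieck ring (expressed by the universal property: every
semiring morphism from `S` to a commutative ring factors uniquely through `j`).
Then `G` carries a unique pre-λ-ring structure making `j` a λ-morphism, and for any
pre-λ-ring `R` and λ-morphism `S → R`, the induced ring morphism `G → R` is a
λ-morphism. -/
theorem grothendieck_preLambda {S G : Type u} [CommSemiring S] [CommRing G]
    (l : ℕ → S → S) (hl : IsPreLambda l) (j : S →+* G)
    (huniv : ∀ (T : Type u) [CommRing T] (f : S →+* T),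
      ∃! F : G →+* T, ∀ s : S, F (j s) = f s) :
    (∃! L : ℕ → G → G, IsPreLambda L ∧ ∀ (d : ℕ) (x : S), L d (j x) = j (l d x)) ∧
    (∀ L : ℕ → G → G, IsPreLambda L → (∀ (d : ℕ) (x : S), L d (j x) = j (l d x)) →
      ∀ (R : Type u) [CommRing R] (lR : ℕ → R → R), IsPreLambda lR →
        ∀ f : S →+* R, (∀ (d : ℕ) (x : S), f (l d x) = lR d (f x)) →
          ∀ F : G →+* R, (∀ s : S, F (j s) = f s) →
            ∀ (d : ℕ) (x : G), F (L d x) = lR d (F x)) := by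
  classical
  obtain ⟨hl0, hl1, hladd⟩ := hl
  -- the exponential series map S → 1 + t·G[[t]]
  set P : S → PowerSeries G := fun a => PowerSeries.mk fun d => j (l d a) with hPdef
  have hPcoeff : ∀ (a : S) (d : ℕ), PowerSeries.coeff (R := G) d (P a) = j (l d a) := by
    intro a d; simp [hPdef]
  have hPc : ∀ a : S, PowerSeries.constantCoeff (R := G) (P a) = 1 := by
    intro a; simp [hPdef, PowerSeries.constantCoeff_mk, hl0]
  have hPmul : ∀ a b : S, P (a + b) = P a * P b := by
    intro a b
    ext d
    rw [PowerSeries.coeff_mul]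
    simp only [hPcoeff, hladd, map_sum, map_mul]
  have hPunit : ∀ a : S, IsUnit (P a) := by
    intro a
    rw [PowerSeries.isUnit_iff_constantCoeff, hPc]
    exact isUnit_one
  set U : S → (PowerSeries G)ˣ := fun a => (hPunit a).unit with hUdef
  have hUval : ∀ a : S, ((U a : (PowerSeries G)ˣ) : PowerSeries G) = P a := by
    intro a; simp [hUdef]
  have hUmul : ∀ a b : S, U (a + b) = U a * U b := by
    intro a b; apply Units.ext; simp [hUval, hPmul]
  -- surjectivity of pairs
  have hsurj : ∀ x : G, ∃ p : S × S, j p.1 - j p.2 = x := by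
    set G₀ : Subring G :=
      { carrier := Set.range fun p : S × S => j p.1 - j p.2
        mul_mem' := by
          rintro x y ⟨⟨a, b⟩, rfl⟩ ⟨⟨c, d⟩, rfl⟩
          exact ⟨(a * c + b * d, a * d + b * c), by simp only [map_add, map_mul]; ring⟩
        one_mem' := ⟨(1, 0), by simp⟩
        add_mem' := by
          rintro x y ⟨⟨a, b⟩, rfl⟩ ⟨⟨c, d⟩, rfl⟩
          exact ⟨(a + c, b + d), by simp only [map_add]; ring⟩
        zero_mem' := ⟨(0, 0), by simp⟩
        neg_mem' := by
          rintro x ⟨⟨a, b⟩, rfl⟩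
          exact ⟨(b, a), by simp only []; ring⟩ } with hG₀
    obtain ⟨F₀, hF₀, -⟩ := huniv G₀ (j.codRestrict G₀ fun s => ⟨(s, 0), by simp⟩)
    obtain ⟨Fid, hFid, hun⟩ := huniv G j
    have h1 : G₀.subtype.comp F₀ = RingHom.id G := by
      have e1 := hun (G₀.subtype.comp F₀) (fun s => by
        show ((F₀ (j s) : G₀) : G) = j s
        rw [hF₀]; rfl)
      have e2 := hun (RingHom.id G) (fun s => rfl)
      exact e1.trans e2.symm
    intro x
    have hx : ((F₀ x : G₀) : G) = x := RingHom.congr_fun h1 x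
    obtain ⟨p, hp⟩ := (F₀ x).2
    exact ⟨p, hp.trans hx⟩
  -- kernel characterization via the concrete Grothendieck ring
  have hker : ∀ u v : S, j u = j v → ∃ s : S, u + s = v + s := by
    obtain ⟨Fk, hFk, -⟩ := huniv (GrothAux.GR S) (GrothAux.mkHom S)
    intro u v h
    exact GrothAux.mk_cancel (by rw [← hFk, ← hFk, h])
  have hPker : ∀ u v : S, j u = j v → P u = P v := by
    intro u v h
    obtain ⟨s, hs⟩ := hker u v h
    have e : P (u + s) = P (v + s) := by rw [hs]
    rw [hPmul, hPmul] at e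
    exact (hPunit s).mul_right_cancel e
  have hUker : ∀ u v : S, j u = j v → U u = U v := by
    intro u v h; apply Units.ext; rw [hUval, hUval]; exact hPker u v h
  choose rep hrep using hsurj
  set V : G → (PowerSeries G)ˣ := fun x => U (rep x).1 / U (rep x).2 with hVdef
  have hVval : ∀ x : G, V x = U (rep x).1 / U (rep x).2 := fun x => rfl
  have hVspec : ∀ (x : G) (a b : S), j a - j b = x → V x = U a / U b := by
    intro x a b h
    have h2 : j (a + (rep x).2) = j ((rep x).1 + b) := by
      rw [map_add, map_add]
      have := (hrep x).trans h.symm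
      -- j (rep x).1 - j (rep x).2 = j a - j b
      rw [sub_eq_sub_iff_add_eq_add] at this
      linear_combination this.symm
    have h3 := hUker _ _ h2
    rw [hUmul, hUmul] at h3
    rw [hVval, div_eq_div_iff_mul_eq_mul]
    exact h3.symm
  have hVadd : ∀ x y : G, V (x + y) = V x * V y := by
    intro x y
    have h : j ((rep x).1 + (rep y).1) - j ((rep x).2 + (rep y).2) = x + y := by
      rw [map_add, map_add]; linear_combination hrep x + hrep y
    rw [hVspec (x + y) _ _ h, hUmul, hUmul, hVval, hVval, mul_div_mul_comm]
  have hU0 : U 0 = 1 := by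
    have h := hUmul 0 0
    rw [add_zero] at h
    exact (left_eq_mul.mp h)
  have hVj : ∀ s : S, V (j s) = U s := by
    intro s
    rw [hVspec (j s) s 0 (by simp), hU0, div_one]
  have hVmulU : ∀ x : G, (V x : PowerSeries G) * P (rep x).2 = P (rep x).1 := by
    intro x
    have h : V x * U (rep x).2 = U (rep x).1 := by rw [hVval]; exact div_mul_cancel _ _
    calc (V x : PowerSeries G) * P (rep x).2
        = ((V x * U (rep x).2 : (PowerSeries G)ˣ) : PowerSeries G) := by
          rw [Units.val_mul, hUval]
      _ = P (rep x).1 := by rw [h, hUval]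
  have hVc : ∀ x : G, PowerSeries.constantCoeff (R := G) ((V x : (PowerSeries G)ˣ) : PowerSeries G) = 1 := by
    intro x
    have := congrArg (PowerSeries.constantCoeff (R := G)) (hVmulU x)
    rw [map_mul, hPc, hPc, mul_one] at this
    exact this
  set L : ℕ → G → G := fun d x => PowerSeries.coeff (R := G) d ((V x : (PowerSeries G)ˣ) : PowerSeries G)
    with hLdef
  have hLcoeff : ∀ (d : ℕ) (x : G),
      L d x = PowerSeries.coeff (R := G) d ((V x : (PowerSeries G)ˣ) : PowerSeries G) := fun d x => rfl
  have hLj : ∀ (d : ℕ) (x : S), L d (j x) = j (l d x) := by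
    intro d x
    rw [hLcoeff, hVj, hUval, hPcoeff]
  have hL0 : ∀ x : G, L 0 x = 1 := by
    intro x
    rw [hLcoeff, PowerSeries.coeff_zero_eq_constantCoeff_apply, hVc]
  have hL1 : ∀ x : G, L 1 x = x := by
    intro x
    have h := congrArg (PowerSeries.coeff (R := G) 1) (hVmulU x)
    rw [PowerSeries.coeff_mul] at h
    have hant : (Finset.HasAntidiagonal.antidiagonal 1 : Finset (ℕ × ℕ)) = {(0, 1), (1, 0)} := rfl
    rw [hant, Finset.sum_insert (by decide), Finset.sum_singleton] at h
    simp only [PowerSeries.coeff_zero_eq_constantCoeff_apply, hVc, hPcoeff, hPc, hl1, hl0, map_one, one_mul,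
      mul_one] at h
    -- h : j (rep x).2 + coeff 1 (V x) = j (rep x).1
    rw [hLcoeff]
    have := hrep x
    -- coeff 1 (V x) = j (rep x).1 - j (rep x).2 = x
    linear_combination h + this
  have hLadd : ∀ (d : ℕ) (x y : G),
      L d (x + y) = ∑ pq ∈ Finset.HasAntidiagonal.antidiagonal d, L pq.1 x * L pq.2 y := by
    intro d x y
    rw [hLcoeff, hVadd, Units.val_mul, PowerSeries.coeff_mul]
  constructor
  · refine ⟨L, ⟨⟨hL0, hL1, hLadd⟩, hLj⟩, ?_⟩
    rintro L' ⟨⟨hL'0, hL'1, hL'add⟩, hL'j⟩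
    funext d x
    have hW'mul : ∀ u w : G, (PowerSeries.mk fun n => L' n (u + w))
        = (PowerSeries.mk fun n => L' n u) * PowerSeries.mk fun n => L' n w := by
      intro u w
      ext n
      rw [PowerSeries.coeff_mul]
      simp only [PowerSeries.coeff_mk, hL'add]
    have e2 : ∀ s : S, (PowerSeries.mk fun n => L' n (j s)) = P s := by
      intro s; ext n; simp only [PowerSeries.coeff_mk, hL'j, hPcoeff]
    have hx : x + j (rep x).2 = j (rep x).1 := by linear_combination -hrep x
    have h1 : (PowerSeries.mk fun n => L' n x) * (PowerSeries.mk fun n => L' n (j (rep x).2))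
        = PowerSeries.mk fun n => L' n (j (rep x).1) := by rw [← hW'mul, hx]
    rw [e2, e2] at h1
    have key : (PowerSeries.mk fun n => L' n x) = ((V x : (PowerSeries G)ˣ) : PowerSeries G) :=
      (hPunit _).mul_right_cancel (h1.trans (hVmulU x).symm)
    have := congrArg (PowerSeries.coeff (R := G) d) key
    rw [PowerSeries.coeff_mk] at this
    rw [this, hLcoeff]
  · intro L hL hLj' R _ lR hlR f hf F hFj d x
    obtain ⟨hL0', hL1', hLadd'⟩ := hL
    obtain ⟨hlR0, hlR1, hlRadd⟩ := hlR
    set A : G → PowerSeries R := fun y => PowerSeries.mk fun n => F (L n y) with hA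
    set B : G → PowerSeries R := fun y => PowerSeries.mk fun n => lR n (F y) with hB
    have hAmul : ∀ u w : G, A (u + w) = A u * A w := by
      intro u w
      ext n
      rw [hA]
      simp only [PowerSeries.coeff_mk, PowerSeries.coeff_mul, hLadd', map_sum, map_mul]
    have hBmul : ∀ u w : G, B (u + w) = B u * B w := by
      intro u w
      ext n
      rw [hB]
      simp only [PowerSeries.coeff_mk, PowerSeries.coeff_mul, map_add, hlRadd]
    have hAB : ∀ s : S, A (j s) = B (j s) := by
      intro s
      ext n
      simp only [hA, hB, PowerSeries.coeff_mk, hLj', hFj, hf]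
    have hBunit : IsUnit (B (j (rep x).2)) := by
      rw [PowerSeries.isUnit_iff_constantCoeff]
      have : PowerSeries.constantCoeff (R := R) (B (j (rep x).2)) = 1 := by
        simp [hB, PowerSeries.constantCoeff_mk, hlR0]
      rw [this]; exact isUnit_one
    have hx : x + j (rep x).2 = j (rep x).1 := by linear_combination -hrep x
    have h1 : A x * A (j (rep x).2) = A (j (rep x).1) := by rw [← hAmul, hx]
    have h2 : B x * B (j (rep x).2) = B (j (rep x).1) := by rw [← hBmul, hx]
    have h3 : A x * B (j (rep x).2) = B x * B (j (rep x).2) := by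
      calc A x * B (j (rep x).2) = A x * A (j (rep x).2) := by rw [hAB]
        _ = A (j (rep x).1) := h1
        _ = B (j (rep x).1) := hAB _
        _ = B x * B (j (rep x).2) := h2.symm
    have hABx : A x = B x := hBunit.mul_right_cancel h3
    have := congrArg (PowerSeries.coeff (R := R) d) hABx
    simpa only [hA, hB, PowerSeries.coeff_mk] using this
end
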